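/- arXiv:math/0506386 — 2 statements merged into one kernel-verified Lean document; each statement's English description precedes it below -/
import Mathlib

section
/- Let l ≥ 1 and for i = 1, …, l let d_i > 0 and a_i, b_i be positive reals (a_i = ρ(u_i)μ(u_i), b_i = ρ(v_i)μ(v_i)), and let f_i : ℝ → ℝ be f_i(x) = (1 − x/d_i)·(a_i/2) + (x/d_i)·(b_i/2). Then the following are equivalent: (1) for every k with 1 ≤ k ≤ l, the partial-sum function x ↦ f_1(x) + ⋯ + f_k(x) is monotone nondecreasing on ℝ; (2) for every k with 1 ≤ k ≤ l, Σ_{i=1}^{k} b_i/d_i ≥ Σ_{i=1}^{k} a_i/d_i. (This is Proposition 3.2: under the linear assumption, a family of parallel lines passing through a cut C = {u_1v_1, …, u_lv_l} is a parallel bundle iff the angle factors satisfy the linear inequality system Σ_{i=1}^{k} ρ(v_i)μ(v_i)/d(u_iv_i) ≥ Σ_{i=1}^{k} ρ(u_i)μ(u_i)/d(u_iv_i) for all k.) -/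
/-- Proposition 3.2: under the linear assumption, with angle functions
`f i x = (1 − x/dᵢ)·(aᵢ/2) + (x/dᵢ)·(bᵢ/2)` on the edges of a cut, all partial sums of
the angle functions are monotone nondecreasing (i.e. the family is a parallel bundle)
iff `∑_{i=1}^{k} bᵢ/dᵢ ≥ ∑_{i=1}^{k} aᵢ/dᵢ` for every `k` with `1 ≤ k ≤ l`. -/
theorem parallel_bundle_cut_linear (l : ℕ) (hl : 1 ≤ l) (d a b : ℕ → ℝ)
    (hd : ∀ i, 1 ≤ i → i ≤ l → 0 < d i)
    (ha : ∀ i, 1 ≤ i → i ≤ l → 0 < a i)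
    (hb : ∀ i, 1 ≤ i → i ≤ l → 0 < b i) :
    (∀ k, 1 ≤ k → k ≤ l →
      Monotone (fun x : ℝ =>
        ∑ i ∈ Finset.Icc 1 k, ((1 - x / d i) * (a i / 2) + (x / d i) * (b i / 2)))) ↔
    (∀ k, 1 ≤ k → k ≤ l →
      ∑ i ∈ Finset.Icc 1 k, a i / d i ≤ ∑ i ∈ Finset.Icc 1 k, b i / d i) := by
  have key : ∀ k (x : ℝ),
      (∑ i ∈ Finset.Icc 1 k, ((1 - x / d i) * (a i / 2) + (x / d i) * (b i / 2))) =
      (∑ i ∈ Finset.Icc 1 k, a i / 2) +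
        x * ((∑ i ∈ Finset.Icc 1 k, (b i / d i - a i / d i)) / 2) := by
    intro k x
    rw [← mul_div_assoc, Finset.mul_sum, Finset.sum_div, ← Finset.sum_add_distrib]
    refine Finset.sum_congr rfl fun i _ => ?_
    ring
  constructor
  · intro h k hk1 hkl
    have hm := h k hk1 hkl
    have h01 : (0 : ℝ) ≤ 1 := zero_le_one
    have := hm h01
    simp only [key] at this
    have hs : 0 ≤ (∑ i ∈ Finset.Icc 1 k, (b i / d i - a i / d i)) / 2 := by linarith
    have := Finset.sum_sub_distrib (s := Finset.Icc 1 k)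
      (f := fun i => b i / d i) (g := fun i => a i / d i)
    linarith [hs]
  · intro h k hk1 hkl
    intro x y hxy
    simp only [key]
    have hs : 0 ≤ (∑ i ∈ Finset.Icc 1 k, (b i / d i - a i / d i)) / 2 := by
      have := h k hk1 hkl
      have := Finset.sum_sub_distrib (s := Finset.Icc 1 k)
        (f := fun i => b i / d i) (g := fun i => a i / d i)
      linarith
    nlinarith [mul_le_mul_of_nonneg_right hxy hs]
end

section
/- Let l ≥ 1 and for i = 1, …, l let d_i > 0 and let ρu_i, μu_i, ρv_i, μv_i be positive reals satisfying ρu_i/ρv_i ≤ μv_i/μu_i for every i. Let f_i : ℝ → ℝ be f_i(x) = (1 − x/d_i)·(ρu_i·μu_i/2) + (x/d_i)·(ρv_i·μv_i/2). Then for every k with 1 ≤ k ≤ l, the partial-sum function x ↦ f_1(x) + ⋯ + f_k(x) is monotone nondecreasing on ℝ. (This is Proposition 3.3: if ρ(u_i)/ρ(v_i) ≤ μ(v_i)/μ(u_i) for every edge u_iv_i of a cut C, then under the linear assumption a family of parallel lines passing through C is a parallel bundle.) -/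
/-! Each angle function is affine with slope `(ρvᵢμvᵢ − ρuᵢμuᵢ) / (2dᵢ)`, and the edgewise
inequality `ρuᵢ/ρvᵢ ≤ μvᵢ/μuᵢ` says exactly that this slope is nonnegative. A sum of
nondecreasing functions is nondecreasing. -/

theorem monotone_linear_interpolation_of_le {d a b : ℝ} (hd : 0 < d) (hab : a ≤ b) :
    Monotone fun x : ℝ => (1 - x / d) * a + (x / d) * b := by
  have hslope : 0 ≤ (b - a) / d := div_nonneg (sub_nonneg.mpr hab) hd.le
  have hform : (fun x : ℝ => (1 - x / d) * a + (x / d) * b) = fun x => a + x * ((b - a) / d) := by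
    funext x
    ring
  rw [hform]
  exact (monotone_id.mul_const hslope).const_add a

theorem mul_le_mul_of_div_le_div {ρu μu ρv μv : ℝ} (hρv : 0 < ρv) (hμu : 0 < μu)
    (h : ρu / ρv ≤ μv / μu) : ρu * μu ≤ ρv * μv := by
  rw [div_le_div_iff₀ hρv hμu] at h
  linarith

theorem Finset.monotone_sum_of_monotone {ι α : Type*} [Preorder α] (s : Finset ι)
    {f : ι → α → ℝ} (hf : ∀ i ∈ s, Monotone (f i)) :
    Monotone fun x => ∑ i ∈ s, f i x :=
  fun _ _ hxy => Finset.sum_le_sum fun i hi => hf i hi hxy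

theorem parallel_bundle_of_edgewise_general (l : ℕ) (d ρu μu ρv μv : ℕ → ℝ)
    (hd : ∀ i, 1 ≤ i → i ≤ l → 0 < d i)
    (hμu : ∀ i, 1 ≤ i → i ≤ l → 0 < μu i)
    (hρv : ∀ i, 1 ≤ i → i ≤ l → 0 < ρv i)
    (hineq : ∀ i, 1 ≤ i → i ≤ l → ρu i / ρv i ≤ μv i / μu i) :
    ∀ k, 1 ≤ k → k ≤ l →
      Monotone (fun x : ℝ =>
        ∑ i ∈ Finset.Icc 1 k,
          ((1 - x / d i) * (ρu i * μu i / 2) + (x / d i) * (ρv i * μv i / 2))) := by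
  intro k _ hkl
  refine Finset.monotone_sum_of_monotone _ fun i hi => ?_
  obtain ⟨hi1, hik⟩ := Finset.mem_Icc.mp hi
  have hil : i ≤ l := hik.trans hkl
  have hends : ρu i * μu i ≤ ρv i * μv i :=
    mul_le_mul_of_div_le_div (hρv i hi1 hil) (hμu i hi1 hil) (hineq i hi1 hil)
  exact monotone_linear_interpolation_of_le (hd i hi1 hil) (by linarith)

/-- Proposition 3.3: if `ρuᵢ/ρvᵢ ≤ μvᵢ/μuᵢ` for every edge of a cut, then under the
linear assumption every partial sum of the angle functions
`f i x = (1 − x/dᵢ)·(ρuᵢ·μuᵢ/2) + (x/dᵢ)·(ρvᵢ·μvᵢ/2)` is monotone nondecreasing,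
i.e. the family of parallel lines passing through the cut is a parallel bundle. -/
theorem parallel_bundle_of_edgewise (l : ℕ) (hl : 1 ≤ l) (d ρu μu ρv μv : ℕ → ℝ)
    (hd : ∀ i, 1 ≤ i → i ≤ l → 0 < d i)
    (hρu : ∀ i, 1 ≤ i → i ≤ l → 0 < ρu i)
    (hμu : ∀ i, 1 ≤ i → i ≤ l → 0 < μu i)
    (hρv : ∀ i, 1 ≤ i → i ≤ l → 0 < ρv i)
    (hμv : ∀ i, 1 ≤ i → i ≤ l → 0 < μv i)
    (hineq : ∀ i, 1 ≤ i → i ≤ l → ρu i / ρv i ≤ μv i / μu i) :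
    ∀ k, 1 ≤ k → k ≤ l →
      Monotone (fun x : ℝ =>
        ∑ i ∈ Finset.Icc 1 k,
          ((1 - x / d i) * (ρu i * μu i / 2) + (x / d i) * (ρv i * μv i / 2))) :=
  parallel_bundle_of_edgewise_general l d ρu μu ρv μv hd hμu hρv hineq
end
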